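/- arXiv:2102.02990 — 6 statements merged into one kernel-verified Lean document; each statement's English description precedes it below -/
import Mathlib

section
/- In the LTS generated by the TSS T̲ind^(*)(A) the following six rules are admissible: (1) if E1↓(1) and e2↓ then (E1·e2)↓(1); (2) if E1↓(1) then (E1 * e2*)↓(1); (3) if E1 ⇒a E1' then E1·e2 ⇒a E1'·e2; (4) if E1 ⇒a E1' then E1 * e2* ⇒a E1' * e2*; (5) if E1↓(1) and e2 ⇒a E2' then E1·e2 ⇒a E2'; (6) if E1↓(1) and e2* ⇒a E2' then E1 * e2* ⇒a E2'. -/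
universe u v w

/-- Star expressions over a set `A` of actions. -/
inductive StExp (A : Type u) : Type u
  | zero : StExp A
  | one : StExp A
  | act : A → StExp A
  | add : StExp A → StExp A → StExp A
  | mul : StExp A → StExp A → StExp A
  | star : StExp A → StExp A

namespace StExp

variable {A : Type u}

/-- Immediate termination in Milner's TSS `T(A)`. -/
inductive Term : StExp A → Prop
  | one : Term StExp.one
  | addL {e₁ e₂ : StExp A} : Term e₁ → Term (StExp.add e₁ e₂)
  | addR {e₁ e₂ : StExp A} : Term e₂ → Term (StExp.add e₁ e₂)
  | mul {e₁ e₂ : StExp A} : Term e₁ → Term e₂ → Term (StExp.mul e₁ e₂)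
  | star {e : StExp A} : Term (StExp.star e)

/-- Transitions in Milner's TSS `T(A)`. -/
inductive Step : StExp A → A → StExp A → Prop
  | act {a : A} : Step (StExp.act a) a StExp.one
  | addL {e₁ e₂ e' : StExp A} {a : A} : Step e₁ a e' → Step (StExp.add e₁ e₂) a e'
  | addR {e₁ e₂ e' : StExp A} {a : A} : Step e₂ a e' → Step (StExp.add e₁ e₂) a e'
  | mulL {e₁ e₂ e₁' : StExp A} {a : A} :
      Step e₁ a e₁' → Step (StExp.mul e₁ e₂) a (StExp.mul e₁' e₂)
  | mulR {e₁ e₂ e₂' : StExp A} {a : A} :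
      Term e₁ → Step e₂ a e₂' → Step (StExp.mul e₁ e₂) a e₂'
  | star {e e' : StExp A} {a : A} :
      Step e a e' → Step (StExp.star e) a (StExp.mul e' (StExp.star e))

/-- (Syntactic) star height. -/
def height : StExp A → ℕ
  | .zero => 0
  | .one => 0
  | .act _ => 0
  | .add e₁ e₂ => max e₁.height e₂.height
  | .mul e₁ e₂ => max e₁.height e₂.height
  | .star e => e.height + 1

end StExp

/-- Stacked star expressions: `E ::= e | E·e | E * e*`. -/
inductive SExp (A : Type u) : Type u
  | up : StExp A → SExp A
  | pr : SExp A → StExp A → SExp A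
  | st : SExp A → StExp A → SExp A

namespace SExp

variable {A : Type u}

/-- Projection to star expressions, interpreting `*` as `·`. -/
def proj : SExp A → StExp A
  | .up e => e
  | .pr E e => StExp.mul E.proj e
  | .st E e => StExp.mul E.proj (StExp.star e)

/-- `E` is a star expression (contains no stacked product `*`). -/
def IsStExp : SExp A → Prop
  | .up _ => True
  | .pr E _ => IsStExp E
  | .st _ _ => False

/-- Star expressions that are not products (canonical arguments of `up`). -/
def UpOk : StExp A → Prop
  | .mul _ _ => False
  | _ => True

/-- Canonical stacked star expressions: products of star expressions are
represented by `pr` rather than by `up` applied to `StExp.mul`. -/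
def Canonical : SExp A → Prop
  | .up e => UpOk e
  | .pr E _ => Canonical E
  | .st E _ => Canonical E

/-- Canonical embedding of star expressions into stacked star expressions. -/
def flatUp : StExp A → SExp A
  | .mul e₁ e₂ => SExp.pr (flatUp e₁) e₂
  | e => SExp.up e

/-- Immediate termination for stacked star expressions (TSS `T̲^(*)(A)`). -/
inductive STerm : SExp A → Prop
  | up {e : StExp A} : StExp.Term e → STerm (SExp.up e)
  | pr {E : SExp A} {e : StExp A} : STerm E → StExp.Term e → STerm (SExp.pr E e)

/-- Transitions of the TSS `T̲^(*)(A)`; labels in `Option A`, where `none`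
is the empty-step label `1`. -/
inductive SStep : SExp A → Option A → SExp A → Prop
  | act {a : A} : SStep (SExp.up (StExp.act a)) (some a) (SExp.up StExp.one)
  | addL {e₁ e₂ : StExp A} {a : A} {E' : SExp A} :
      SStep (SExp.up e₁) (some a) E' → SStep (SExp.up (StExp.add e₁ e₂)) (some a) E'
  | addR {e₁ e₂ : StExp A} {a : A} {E' : SExp A} :
      SStep (SExp.up e₂) (some a) E' → SStep (SExp.up (StExp.add e₁ e₂)) (some a) E'
  | upMulL {e₁ e₂ : StExp A} {l : Option A} {E₁' : SExp A} :
      SStep (SExp.up e₁) l E₁' → SStep (SExp.up (StExp.mul e₁ e₂)) l (SExp.pr E₁' e₂)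
  | upMulR {e₁ e₂ : StExp A} {a : A} {E₂' : SExp A} :
      StExp.Term e₁ → SStep (SExp.up e₂) (some a) E₂' →
      SStep (SExp.up (StExp.mul e₁ e₂)) (some a) E₂'
  | upStar {e : StExp A} {a : A} {E' : SExp A} :
      SStep (SExp.up e) (some a) E' →
      SStep (SExp.up (StExp.star e)) (some a) (SExp.st E' e)
  | prL {E₁ E₁' : SExp A} {e₂ : StExp A} {l : Option A} :
      SStep E₁ l E₁' → SStep (SExp.pr E₁ e₂) l (SExp.pr E₁' e₂)
  | prR {E₁ E₂' : SExp A} {e₂ : StExp A} {a : A} :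
      STerm E₁ → SStep (SExp.up e₂) (some a) E₂' → SStep (SExp.pr E₁ e₂) (some a) E₂'
  | stL {E₁ E₁' : SExp A} {e₂ : StExp A} {l : Option A} :
      SStep E₁ l E₁' → SStep (SExp.st E₁ e₂) l (SExp.st E₁' e₂)
  | stOne {E₁ : SExp A} {e₂ : StExp A} :
      STerm E₁ → SStep (SExp.st E₁ e₂) none (SExp.up (StExp.star e₂))

/-- `1`-transition. -/
def OneStep (E F : SExp A) : Prop := SStep E none F

/-- Transition with an arbitrary label in `A ∪ {1}`. -/
def AStep (E F : SExp A) : Prop := ∃ l, SStep E l F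

/-- Induced (proper) transition `E ⇒a E'`: a sequence of `1`-transitions
followed by an `a`-transition. -/
def IStep (E : SExp A) (a : A) (E' : SExp A) : Prop :=
  ∃ F, Relation.ReflTransGen OneStep E F ∧ SStep F (some a) E'

/-- Induced termination `E ↓(1)`: a sequence of `1`-transitions ending in a
terminating expression. -/
def ITerm (E : SExp A) : Prop :=
  ∃ F, Relation.ReflTransGen OneStep E F ∧ STerm F

/-- `E` is normed: a path to an expression with immediate termination. -/
def Normed (E : SExp A) : Prop :=
  ∃ F, Relation.ReflTransGen AStep E F ∧ STerm F

/-- `E` is normed⁺: a nonempty sequence of induced transitions to an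
expression with induced termination. -/
def NormedP (E : SExp A) : Prop :=
  ∃ F, Relation.TransGen (fun X Y => ∃ a : A, IStep X a Y) E F ∧ ITerm F

/-- Induced termination as derived in the extension `T̲ind^(*)(A)`. -/
inductive IndTerm : SExp A → Prop
  | base {E : SExp A} : STerm E → IndTerm E
  | step {E F : SExp A} : SStep E none F → IndTerm F → IndTerm E

/-- Induced transitions as derived in the extension `T̲ind^(*)(A)`. -/
inductive IndStep : SExp A → A → SExp A → Prop
  | base {E E' : SExp A} {a : A} : SStep E (some a) E' → IndStep E a E'
  | step {E F E' : SExp A} {a : A} : SStep E none F → IndStep F a E' → IndStep E a E'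

/-- Marked transitions of the TSS `T̲̂^(*)(A)`: marking label `0` means a body
(`bo`) transition, `n ≥ 1` a loop-entry transition of level `n`. -/
inductive MStep : SExp A → Option A × ℕ → SExp A → Prop
  | act {a : A} : MStep (SExp.up (StExp.act a)) (some a, 0) (SExp.up StExp.one)
  | addL {e₁ e₂ : StExp A} {a : A} {n : ℕ} {E' : SExp A} :
      MStep (SExp.up e₁) (some a, n) E' → MStep (SExp.up (StExp.add e₁ e₂)) (some a, 0) E'
  | addR {e₁ e₂ : StExp A} {a : A} {n : ℕ} {E' : SExp A} :
      MStep (SExp.up e₂) (some a, n) E' → MStep (SExp.up (StExp.add e₁ e₂)) (some a, 0) E'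
  | upMulL {e₁ e₂ : StExp A} {l : Option A × ℕ} {E₁' : SExp A} :
      MStep (SExp.up e₁) l E₁' → MStep (SExp.up (StExp.mul e₁ e₂)) l (SExp.pr E₁' e₂)
  | upMulR {e₁ e₂ : StExp A} {a : A} {n : ℕ} {E₂' : SExp A} :
      StExp.Term e₁ → MStep (SExp.up e₂) (some a, n) E₂' →
      MStep (SExp.up (StExp.mul e₁ e₂)) (some a, 0) E₂'
  | upStarP {e : StExp A} {a : A} {n : ℕ} {E' : SExp A} :
      NormedP (SExp.up e) → MStep (SExp.up e) (some a, n) E' →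
      MStep (SExp.up (StExp.star e)) (some a, e.height + 1) (SExp.st E' e)
  | upStarN {e : StExp A} {a : A} {n : ℕ} {E' : SExp A} :
      ¬ NormedP (SExp.up e) → MStep (SExp.up e) (some a, n) E' →
      MStep (SExp.up (StExp.star e)) (some a, 0) (SExp.st E' e)
  | prL {E₁ E₁' : SExp A} {e₂ : StExp A} {l : Option A × ℕ} :
      MStep E₁ l E₁' → MStep (SExp.pr E₁ e₂) l (SExp.pr E₁' e₂)
  | prR {E₁ E₂' : SExp A} {e₂ : StExp A} {a : A} {n : ℕ} :
      STerm E₁ → MStep (SExp.up e₂) (some a, n) E₂' →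
      MStep (SExp.pr E₁ e₂) (some a, 0) E₂'
  | stL {E₁ E₁' : SExp A} {e₂ : StExp A} {l : Option A × ℕ} :
      MStep E₁ l E₁' → MStep (SExp.st E₁ e₂) l (SExp.st E₁' e₂)
  | stOne {E₁ : SExp A} {e₂ : StExp A} :
      STerm E₁ → MStep (SExp.st E₁ e₂) (none, 0) (SExp.up (StExp.star e₂))

/-- Body transition `→bo`. -/
def BStep (E F : SExp A) : Prop := ∃ l : Option A, MStep E (l, 0) F

/-- Star height of stacked star expressions. -/
def heightS : SExp A → ℕ
  | .up e => e.height
  | .pr E e => max E.heightS e.height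
  | .st E e => max E.heightS (e.height + 1)

end SExp

/-- Applicative contexts of stacked star expressions. -/
inductive AppCtx (A : Type u) : Type u
  | hole : AppCtx A
  | pr : AppCtx A → StExp A → AppCtx A
  | st : AppCtx A → StExp A → AppCtx A

/-- Filling the hole of an applicative context. -/
def AppCtx.fill {A : Type u} : AppCtx A → SExp A → SExp A
  | .hole, E => E
  | .pr C e, E => SExp.pr (C.fill E) e
  | .st C e, E => SExp.st (C.fill E) e

/-- A labeled transition system with termination. -/
structure LTS (S : Type u) (L : Type v) where
  step : S → L → S → Prop
  term : S → Prop

/-- Bisimulation between two LTSs with termination. -/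
def IsBisimulation {S₁ : Type u} {S₂ : Type v} {L : Type w}
    (M₁ : LTS S₁ L) (M₂ : LTS S₂ L) (B : S₁ → S₂ → Prop) : Prop :=
  (∃ s₁ s₂, B s₁ s₂) ∧
  ∀ s₁ s₂, B s₁ s₂ →
    ((∀ a s₁', M₁.step s₁ a s₁' → ∃ s₂', M₂.step s₂ a s₂' ∧ B s₁' s₂') ∧
     (∀ a s₂', M₂.step s₂ a s₂' → ∃ s₁', M₁.step s₁ a s₁' ∧ B s₁' s₂') ∧
     (M₁.term s₁ ↔ M₂.term s₂))

/-- The star expressions LTS `L(StExp(A))`. -/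
def stexpLTS (A : Type u) : LTS (StExp A) A := ⟨StExp.Step, StExp.Term⟩

/-- The induced LTS of the stacked star expressions 1-LTS `L1(StExp^(*)(A))`. -/
def indSExpLTS (A : Type u) : LTS (SExp A) A := ⟨SExp.IStep, SExp.ITerm⟩

/-- A (rooted) chart. -/
structure Chart (V : Type u) (L : Type v) where
  verts : Set V
  start : V
  step : V → L → V → Prop
  term : V → Prop

/-- Bisimulation between two charts: a bisimulation between the underlying
LTSs that relates the start vertices. -/
def IsChartBisim {V₁ : Type u} {V₂ : Type v} {L : Type w}
    (C₁ : Chart V₁ L) (C₂ : Chart V₂ L) (B : V₁ → V₂ → Prop) : Prop :=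
  (∀ x y, B x y → x ∈ C₁.verts ∧ y ∈ C₂.verts) ∧
  B C₁.start C₂.start ∧
  ∀ x y, B x y →
    ((∀ a x', C₁.step x a x' → ∃ y', C₂.step y a y' ∧ B x' y') ∧
     (∀ a y', C₂.step y a y' → ∃ x', C₁.step x a x' ∧ B x' y') ∧
     (C₁.term x ↔ C₂.term y))

def ChartBisimilar {V₁ : Type u} {V₂ : Type v} {L : Type w}
    (C₁ : Chart V₁ L) (C₂ : Chart V₂ L) : Prop :=
  ∃ B, IsChartBisim C₁ C₂ B

/-- Star expressions reachable from `e` in Milner's LTS. -/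
def MReach {A : Type u} (e : StExp A) : Set (StExp A) :=
  {f | Relation.ReflTransGen (fun x y => ∃ a, StExp.Step x a y) e f}

/-- The chart interpretation `C(e)` of a star expression. -/
def chartInt {A : Type u} (e : StExp A) : Chart (StExp A) A where
  verts := MReach e
  start := e
  step x a y := x ∈ MReach e ∧ StExp.Step x a y
  term x := x ∈ MReach e ∧ StExp.Term x

/-- Stacked star expressions reachable from (the canonical representation of)
`e` in the 1-LTS. -/
def SReach {A : Type u} (e : StExp A) : Set (SExp A) :=
  {F | Relation.ReflTransGen SExp.AStep (SExp.flatUp e) F}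

/-- The 1-chart interpretation `C1(e)` of a star expression. -/
def oneChartInt {A : Type u} (e : StExp A) : Chart (SExp A) (Option A) where
  verts := SReach e
  start := SExp.flatUp e
  step x l y := x ∈ SReach e ∧ SExp.SStep x l y
  term x := x ∈ SReach e ∧ SExp.STerm x

/-- The entry/body-labeled 1-chart interpretation `Ĉ1(e)`. -/
def markedOneChartInt {A : Type u} (e : StExp A) : Chart (SExp A) (Option A × ℕ) where
  verts := SReach e
  start := SExp.flatUp e
  step x l y := x ∈ SReach e ∧ SExp.MStep x l y
  term x := x ∈ SReach e ∧ SExp.STerm x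

/-- The induced chart of a 1-chart: induced transitions and induced
termination. -/
def indChart {V : Type u} {A : Type v} (C : Chart V (Option A)) : Chart V A where
  verts := C.verts
  start := C.start
  step x a y := ∃ u, Relation.ReflTransGen (fun s t => C.step s none t) x u ∧ C.step u (some a) y
  term x := ∃ u, Relation.ReflTransGen (fun s t => C.step s none t) x u ∧ C.term u

/-- An infinite path from the start vertex of a chart. -/
def IsInfPathFrom {V : Type u} {L : Type v} (C : Chart V L) (p : ℕ → V) : Prop :=
  p 0 = C.start ∧ ∀ i, ∃ l, C.step (p i) l (p (i + 1))

/-- Loop chart: (L1) an infinite path from the start vertex exists, (L2) every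
infinite path from the start vertex returns to it after a positive number of
transitions, (L3) only the start vertex may terminate. -/
def IsLoopChart {V : Type u} {L : Type v} (C : Chart V L) : Prop :=
  (∃ p, IsInfPathFrom C p) ∧
  (∀ p, IsInfPathFrom C p → ∃ k, 0 < k ∧ p k = C.start) ∧
  (∀ w ∈ C.verts, C.term w → w = C.start)

namespace LLEE

variable {S : Type u} {L : Type v}

/-- Body transition of an entry/body-labeling. -/
def Body (step : S → L × ℕ → S → Prop) (x y : S) : Prop := ∃ l, step x (l, 0) y

/-- Entry transition of level `n` of an entry/body-labeling. -/
def Entry (step : S → L × ℕ → S → Prop) (n : ℕ) (x y : S) : Prop := ∃ l, step x (l, n) y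

/-- Vertices of the induced subchart at `(v, n)`: on paths that start with an
`→[n]` transition from `v`, continue with body transitions, and halt upon
revisiting `v`. -/
def loopVerts (step : S → L × ℕ → S → Prop) (v : S) (n : ℕ) : Set S :=
  insert v {w | ∃ u, Entry step n v u ∧
    Relation.ReflTransGen (fun x y => Body step x y ∧ x ≠ v) u w}

/-- The induced subchart at `(v, n)`. -/
def subchartAt (step : S → L × ℕ → S → Prop) (term : S → Prop) (v : S) (n : ℕ) :
    Chart S (L × ℕ) where
  verts := loopVerts step v n
  start := v
  step x l y :=
    (x = v ∧ l.2 = n ∧ step x l y) ∨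
    (x ∈ loopVerts step v n ∧ x ≠ v ∧ l.2 = 0 ∧ step x l y)
  term x := x ∈ loopVerts step v n ∧ term x

/-- LLEE-witness conditions (W1)–(W3) for an entry/body-labeled transition
system with transitions `step` and termination `term`. -/
def IsWitness (step : S → L × ℕ → S → Prop) (term : S → Prop) : Prop :=
  (¬ ∃ p : ℕ → S, ∀ i, Body step (p i) (p (i + 1))) ∧
  (∀ v n, 0 < n → (∃ w, Entry step n v w) → IsLoopChart (subchartAt step term v n)) ∧
  (∀ v n, 0 < n → (∃ w, Entry step n v w) →
    ∀ t, t ∈ loopVerts step v n → t ≠ v → ∀ m t', 0 < m → Entry step m t t' → m < n)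

end LLEE

namespace LEE

variable {V : Type u} {L : Type v}

/-- Vertices of the subchart generated from `v` by a set `U` of transitions
from `v`: paths start with a transition in `U` and continue (with arbitrary
transitions) until `v` is reached again. -/
def genVerts (C : Chart V L) (v : V) (U : Set (V × L × V)) : Set V :=
  insert v {w | ∃ u, (∃ l, (v, l, u) ∈ U) ∧
    Relation.ReflTransGen (fun x y => (∃ l, C.step x l y) ∧ x ≠ v) u w}

/-- The subchart generated from `v` by the transitions in `U`. -/
def genSubchart (C : Chart V L) (v : V) (U : Set (V × L × V)) : Chart V L where
  verts := genVerts C v U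
  start := v
  step x l y :=
    (x = v ∧ (v, l, y) ∈ U) ∨
    (x ∈ genVerts C v U ∧ x ≠ v ∧ C.step x l y)
  term x := x ∈ genVerts C v U ∧ C.term x

/-- `U` determines a loop subchart of `C` rooted at `v`. -/
def IsLoopSubchart (C : Chart V L) (v : V) (U : Set (V × L × V)) : Prop :=
  v ∈ C.verts ∧ U.Nonempty ∧
  (∀ t ∈ U, t.1 = v ∧ C.step t.1 t.2.1 t.2.2) ∧
  IsLoopChart (genSubchart C v U)

/-- Elimination of the loop-entry transitions in `U`, followed by removal of
all vertices and transitions that become unreachable. -/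
def elim (C : Chart V L) (U : Set (V × L × V)) : Chart V L :=
  let step' : V → L → V → Prop := fun x l y => C.step x l y ∧ (x, l, y) ∉ U
  let R : Set V := {w | Relation.ReflTransGen (fun x y => ∃ l, step' x l y) C.start w}
  { verts := C.verts ∩ R
    start := C.start
    step := fun x l y => step' x l y ∧ x ∈ R ∧ y ∈ R
    term := fun x => C.term x ∧ x ∈ R }

/-- One step of the loop elimination procedure. -/
def ElimStep (C C' : Chart V L) : Prop :=
  ∃ v U, IsLoopSubchart C v U ∧ C' = elim C U

/-- The chart has an infinite path. -/
def HasInfPath (C : Chart V L) : Prop :=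
  ∃ p : ℕ → V, p 0 ∈ C.verts ∧ ∀ i, ∃ l, C.step (p i) l (p (i + 1))

/-- The loop existence and elimination property LEE: repeated elimination of
loop subcharts results in a chart without an infinite path. -/
def SatisfiesLEE (C : Chart V L) : Prop :=
  ∃ C', Relation.ReflTransGen ElimStep C C' ∧ ¬ HasInfPath C'

end LEE

/-- A maximal path of body transitions from `X` in the entry/body-labeled
1-LTS: finite (of length `len`) or infinite (`len = ⊤`), and if finite then
not extensible by any further body transition. -/
structure BoPath (A : Type u) (X : SExp A) where
  len : ℕ∞
  f : ℕ → SExp A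
  head : f 0 = X
  steps : ∀ i : ℕ, (i : ℕ∞) < len → SExp.BStep (f i) (f (i + 1))
  maximal : ∀ n : ℕ, len = (n : ℕ∞) → ∀ Y, ¬ SExp.BStep (f n) Y

/-- Canonical stacked star expressions (the states of the stacked star
expressions 1-LTS `L1(StExp^(*)(A))`). -/
def CSExp (A : Type u) : Type u := {E : SExp A // SExp.Canonical E}

/-!
Each rule follows by induction on the `T̲ind^(*)(A)`-derivation of the premise about `E₁`,
which is a chain of `1`-transitions ending in termination or in an `a`-transition. The
contexts `_ · e₂` and `_ * e₂*` preserve every transition of `E₁`, so the chain is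
transported into the context, and only its last step needs a rule about the context. In
rules (5) and (6) the premise about `e₂` (resp. `e₂*`) is already an immediate transition,
because a plain star expression has no `1`-transitions.
-/

namespace SExp

variable {A : Type u}

theorem SStep.ne_none_of_up {e : StExp A} {l : Option A} {F : SExp A}
    (h : SStep (up e) l F) : l ≠ none := by
  generalize hE : up e = E at h
  induction h generalizing e with
  | upMulL _ ih => exact ih rfl
  | prL | prR | stL | stOne => nomatch hE
  | _ => nofun

theorem IndStep.sStep_of_up {e : StExp A} {a : A} {E' : SExp A}
    (h : IndStep (up e) a E') : SStep (up e) (some a) E' := by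
  cases h with
  | base h => exact h
  | step h _ => exact absurd rfl h.ne_none_of_up

section Context

variable {f : SExp A → SExp A}

theorem IndTerm.map (hf : ∀ {E F}, SStep E none F → SStep (f E) none (f F))
    (hterm : ∀ {E}, STerm E → IndTerm (f E)) {E : SExp A} (h : IndTerm E) :
    IndTerm (f E) := by
  induction h with
  | base h => exact hterm h
  | step h _ ih => exact .step (hf h) ih

theorem IndStep.map (hf : ∀ {E l F}, SStep E l F → SStep (f E) l (f F))
    {E E' : SExp A} {a : A} (h : IndStep E a E') : IndStep (f E) a (f E') := by
  induction h with
  | base h => exact .base (hf h)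
  | step h _ ih => exact .step (hf h) ih

theorem IndTerm.indStep_map (hf : ∀ {E F}, SStep E none F → SStep (f E) none (f F))
    {a : A} {E' : SExp A} (hterm : ∀ {E}, STerm E → IndStep (f E) a E') {E : SExp A}
    (h : IndTerm E) : IndStep (f E) a E' := by
  induction h with
  | base h => exact hterm h
  | step h _ ih => exact .step (hf h) ih

end Context

end SExp

/-- Six admissible rules of the TSS `T̲ind^(*)(A)`. -/
theorem Tind_admissible_rules (A : Type u) :
    (∀ (E₁ : SExp A) (e₂ : StExp A),
      SExp.IndTerm E₁ → StExp.Term e₂ → SExp.IndTerm (SExp.pr E₁ e₂)) ∧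
    (∀ (E₁ : SExp A) (e₂ : StExp A),
      SExp.IndTerm E₁ → SExp.IndTerm (SExp.st E₁ e₂)) ∧
    (∀ (E₁ E₁' : SExp A) (e₂ : StExp A) (a : A),
      SExp.IndStep E₁ a E₁' → SExp.IndStep (SExp.pr E₁ e₂) a (SExp.pr E₁' e₂)) ∧
    (∀ (E₁ E₁' : SExp A) (e₂ : StExp A) (a : A),
      SExp.IndStep E₁ a E₁' → SExp.IndStep (SExp.st E₁ e₂) a (SExp.st E₁' e₂)) ∧
    (∀ (E₁ E₂' : SExp A) (e₂ : StExp A) (a : A),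
      SExp.IndTerm E₁ → SExp.IndStep (SExp.up e₂) a E₂' →
      SExp.IndStep (SExp.pr E₁ e₂) a E₂') ∧
    (∀ (E₁ E₂' : SExp A) (e₂ : StExp A) (a : A),
      SExp.IndTerm E₁ → SExp.IndStep (SExp.up (StExp.star e₂)) a E₂' →
      SExp.IndStep (SExp.st E₁ e₂) a E₂') := by
  refine ⟨fun _ _ h he₂ => ?_, fun _ _ h => ?_, fun _ _ _ _ h => ?_, fun _ _ _ _ h => ?_,
    fun _ _ _ _ h he₂ => ?_, fun _ _ _ _ h he₂ => ?_⟩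
  · exact h.map SExp.SStep.prL fun hE => .base (.pr hE he₂)
  · exact h.map SExp.SStep.stL fun hE => .step (.stOne hE) (.base (.up StExp.Term.star))
  · exact h.map SExp.SStep.prL
  · exact h.map SExp.SStep.stL
  · exact h.indStep_map SExp.SStep.prL fun hE => .base (.prR hE he₂.sStep_of_up)
  · exact h.indStep_map SExp.SStep.stL fun hE => .step (.stOne hE) (.base he₂.sStep_of_up)
end

section
/- For all stacked star expressions E, E' over A and all actions a ∈ A: if E↓(1) is derivable in T̲ind^(*)(A) then π(E)↓ is derivable in Milner's TSS T(A); and if E ⇒a E' is derivable in T̲ind^(*)(A) then π(E) →a π(E') is derivable in T(A). -/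
universe u v w

/-!
An `a`-transition of a stacked star expression projects rule by rule onto a Milner
transition. A `1`-transition `E →1 F` projects to a pair `π(E)`, `π(F)` in which `π(E)`
covers `π(F)`: whatever `π(F)` does immediately, `π(E)` can do too. The only `1`-axiom
`E₁ * e* →1 e*` with `E₁↓` projects to `π(E₁)·e*` and `e*`, where `π(E₁)↓` lets
`π(E₁)·e*` do whatever `e*` does, and the context rules project to left factors of a
product, which preserve covering. Induction on derivations in `T̲ind^(*)(A)` finishes.
-/

namespace StExp

variable {A : Type u}

def Covers (e f : StExp A) : Prop :=
  (Term f → Term e) ∧ ∀ a f', Step f a f' → Step e a f'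

theorem Covers.mul_right {e f : StExp A} (h : Covers e f) (g : StExp A) :
    Covers (e.mul g) (f.mul g) := by
  constructor
  · rintro (_ | _ | _ | ⟨hf, hg⟩)
    exact .mul (h.1 hf) hg
  · rintro a f' (_ | _ | _ | hf | ⟨hf, hg⟩)
    · exact .mulL (h.2 _ _ hf)
    · exact .mulR (h.1 hf) hg

theorem covers_mul_of_term {e : StExp A} (he : Term e) (f : StExp A) :
    Covers (e.mul f) f :=
  ⟨fun hf => .mul he hf, fun _ _ hf => .mulR he hf⟩

end StExp

namespace SExp

variable {A : Type u}

theorem STerm.term_proj {E : SExp A} (h : STerm E) : E.proj.Term := by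
  induction h with
  | up he => exact he
  | pr _ he ih => exact .mul ih he

theorem SStep.step_proj {E E' : SExp A} {a : A} (h : SStep E (some a) E') :
    E.proj.Step a E'.proj := by
  generalize hl : some a = l at h
  induction h with
  | act => cases hl; exact .act
  | addL _ ih => exact .addL (ih hl)
  | addR _ ih => exact .addR (ih hl)
  | upMulL _ ih => exact .mulL (ih hl)
  | upMulR he _ ih => exact .mulR he (ih hl)
  | upStar _ ih => exact .star (ih hl)
  | prL _ ih => exact .mulL (ih hl)
  | prR hE _ ih => exact .mulR hE.term_proj (ih hl)
  | stL _ ih => exact .mulL (ih hl)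
  | stOne => cases hl

theorem SStep.covers_proj {E F : SExp A} (h : SStep E none F) : E.proj.Covers F.proj := by
  generalize hl : none = l at h
  induction h with
  | upMulL _ ih | prL _ ih | stL _ ih => exact (ih hl).mul_right _
  | stOne hE => exact StExp.covers_mul_of_term hE.term_proj _
  | _ => cases hl

theorem IndTerm.term_proj {E : SExp A} (h : IndTerm E) : E.proj.Term := by
  induction h with
  | base hE => exact hE.term_proj
  | step hEF _ ih => exact hEF.covers_proj.1 ih

theorem IndStep.step_proj {E E' : SExp A} {a : A} (h : IndStep E a E') :
    E.proj.Step a E'.proj := by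
  induction h with
  | base hE => exact hE.step_proj
  | step hEF _ ih => exact hEF.covers_proj.2 _ _ ih

end SExp

/-- Derivability in `T̲ind^(*)(A)` projects to derivability in
Milner's TSS `T(A)`. -/
theorem Tind_projects_to_Milner (A : Type u) :
    (∀ E : SExp A, SExp.IndTerm E → StExp.Term (SExp.proj E)) ∧
    (∀ (E E' : SExp A) (a : A),
      SExp.IndStep E a E' → StExp.Step (SExp.proj E) a (SExp.proj E')) :=
  ⟨fun _ h => h.term_proj, fun _ _ _ h => h.step_proj⟩
end

section
/- For all stacked star expressions E over A, star expressions e' over A, and actions a ∈ A: if π(E)↓ is derivable in Milner's TSS T(A) then E↓(1) is derivable in T̲ind^(*)(A); and if π(E) →a e' is derivable in T(A) then there exists a stacked star expression E' with π(E') = e' such that E ⇒a E' is derivable in T̲ind^(*)(A). -/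
universe u v w

/-! By induction on `E`. A step of `π(E)` is either a step of a left factor, which lifts
along the stacking context, or a step of the right factor after `π(E₁)` has terminated.
In the latter case `E₁` itself need not terminate immediately, only after `1`-steps
(by induction, `π(E₁)↓` gives `E₁↓(1)`); those steps lift along the context, and
`E₁ * e*` takes one more `→1` to `e*`. This is why the lift lands in the induced
relations `↓(1)` and `⇒a`. -/

namespace SExp

variable {A : Type u}

theorem IndTerm.map_context {c : SExp A → SExp A} {P : SExp A → Prop}
    (hc : ∀ {E F}, SStep E none F → SStep (c E) none (c F))
    (hP : ∀ {X Y}, SStep X none Y → P Y → P X)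
    (hterm : ∀ {F}, STerm F → P (c F)) {E : SExp A} (h : IndTerm E) : P (c E) := by
  induction h with
  | base hF => exact hterm hF
  | step hEF _ ih => exact hP (hc hEF) ih

theorem IndStep.map_context {c : SExp A → SExp A}
    (hc : ∀ {E l F}, SStep E l F → SStep (c E) l (c F))
    {E E' : SExp A} {a : A} (h : IndStep E a E') : IndStep (c E) a (c E') := by
  induction h with
  | base hE => exact .base (hc hE)
  | step hEF _ ih => exact .step (hc hEF) ih

theorem IndTerm.pr {E : SExp A} {e : StExp A} (h : IndTerm E) (he : StExp.Term e) :
    IndTerm (.pr E e) :=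
  h.map_context (c := (.pr · e)) .prL .step (fun hF => .base (.pr hF he))

theorem IndTerm.st {E : SExp A} (e : StExp A) (h : IndTerm E) : IndTerm (.st E e) :=
  h.map_context (c := (.st · e)) .stL .step (fun hF => .step (.stOne hF) (.base (.up .star)))

theorem IndTerm.indStep_pr {E E₂' : SExp A} {e₂ : StExp A} {a : A} (h : IndTerm E)
    (h₂ : SStep (.up e₂) (some a) E₂') : IndStep (.pr E e₂) a E₂' :=
  h.map_context (c := (.pr · e₂)) (P := (IndStep · a E₂')) .prL .step
    (fun hF => .base (.prR hF h₂))

theorem IndTerm.indStep_st {E E' : SExp A} {e : StExp A} {a : A} (h : IndTerm E)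
    (h' : SStep (.up (.star e)) (some a) E') : IndStep (.st E e) a E' :=
  h.map_context (c := (.st · e)) (P := (IndStep · a E')) .stL .step
    (fun hF => .step (.stOne hF) (.base h'))

theorem indTerm_of_term_proj : ∀ {E : SExp A}, StExp.Term E.proj → IndTerm E
  | .up _, h => .base (.up h)
  | .pr _ _, .mul h₁ h₂ => (indTerm_of_term_proj h₁).pr h₂
  | .st _ e, .mul h₁ _ => (indTerm_of_term_proj h₁).st e

theorem exists_sStep_up_of_step {e e' : StExp A} {a : A} (h : StExp.Step e a e') :
    ∃ E' : SExp A, E'.proj = e' ∧ SStep (.up e) (some a) E' := by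
  induction h with
  | act => exact ⟨.up .one, rfl, .act⟩
  | addL _ ih => obtain ⟨E', rfl, hs⟩ := ih; exact ⟨E', rfl, .addL hs⟩
  | addR _ ih => obtain ⟨E', rfl, hs⟩ := ih; exact ⟨E', rfl, .addR hs⟩
  | mulL _ ih => obtain ⟨E', rfl, hs⟩ := ih; exact ⟨.pr E' _, rfl, .upMulL hs⟩
  | mulR ht _ ih => obtain ⟨E', rfl, hs⟩ := ih; exact ⟨E', rfl, .upMulR ht hs⟩
  | star _ ih => obtain ⟨E', rfl, hs⟩ := ih; exact ⟨.st E' _, rfl, .upStar hs⟩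

theorem exists_indStep_of_step_proj {E : SExp A} {a : A} {e' : StExp A}
    (h : StExp.Step E.proj a e') : ∃ E' : SExp A, E'.proj = e' ∧ IndStep E a E' := by
  induction E generalizing e' with
  | up e =>
    obtain ⟨E', hE', hs⟩ := exists_sStep_up_of_step h
    exact ⟨E', hE', .base hs⟩
  | pr E₁ e₂ ih =>
    cases h with
    | mulL h₁ =>
      obtain ⟨E₁', rfl, hs⟩ := ih h₁
      exact ⟨.pr E₁' e₂, rfl, hs.map_context .prL⟩
    | mulR ht h₂ =>
      obtain ⟨E₂', hE₂', hs⟩ := exists_sStep_up_of_step h₂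
      exact ⟨E₂', hE₂', (indTerm_of_term_proj ht).indStep_pr hs⟩
  | st E₁ e₂ ih =>
    cases h with
    | mulL h₁ =>
      obtain ⟨E₁', rfl, hs⟩ := ih h₁
      exact ⟨.st E₁' e₂, rfl, hs.map_context .stL⟩
    | mulR ht h₂ =>
      obtain ⟨E', hE', hs⟩ := exists_sStep_up_of_step h₂
      exact ⟨E', hE', (indTerm_of_term_proj ht).indStep_st hs⟩

end SExp

/-- Derivability in Milner's TSS `T(A)` for the projection lifts
back to derivability in `T̲ind^(*)(A)`. -/
theorem Milner_lifts_to_Tind (A : Type u) :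
    (∀ E : SExp A, StExp.Term (SExp.proj E) → SExp.IndTerm E) ∧
    (∀ (E : SExp A) (a : A) (e' : StExp A),
      StExp.Step (SExp.proj E) a e' →
      ∃ E' : SExp A, SExp.proj E' = e' ∧ SExp.IndStep E a E') :=
  ⟨fun _ => SExp.indTerm_of_term_proj, fun _ _ _ => SExp.exists_indStep_of_step_proj⟩
end

section
/- If E →l E' is a transition with marking label l ∈ {bo} ∪ {[n] : n ≥ 1} in the entry/body-labeled 1-LTS L̂1(StExp^(*)(A)) generated by the marked TSS T̲̂^(*)(A), then for every applicative context C the transition C[E] →l C[E'] (with the same action and marking label) also holds in L̂1(StExp^(*)(A)). -/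
universe u v w

/-- Marked transitions are preserved under applicative contexts,
with the same action and marking label. -/
theorem marked_step_under_applicative_contexts {A : Type u}
    (E E' : SExp A) (a : Option A) (l : ℕ)
    (h : SExp.MStep E (a, l) E') (C : AppCtx A) :
    SExp.MStep (C.fill E) (a, l) (C.fill E') := by
  induction C with
  | hole => exact h
  | pr _ _ ih => exact SExp.MStep.prL ih
  | st _ _ ih => exact SExp.MStep.stL ih
end

section
/- Every maximal path of body transitions (→bo) from C[E * e*] in L̂1(StExp^(*)(A)), where E is a stacked star expression, e a star expression and C an applicative context, has one of the two forms: (i) C[E0 * e*] →bo C[E1 * e*] →bo ... (finite or infinite) where E = E0 →bo E1 →bo ... is a →bo path of stacked star expressions; or (ii) C[E0 * e*] →bo ... →bo C[En * e*] →bo C[e*] →bo ... for some n ∈ ℕ and stacked star expressions E0,...,En with E = E0 →bo ... →bo En, En↓, and En * e* →bo e*. -/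
universe u v w

namespace AppCtx

variable {A : Type u}

/-- Left inverse of `fun X => C.fill (SExp.st X e)`; its value elsewhere is irrelevant. -/
def unfillSt : AppCtx A → SExp A → SExp A
  | .hole, .st X _ => X
  | .pr C _, .pr Y _ => C.unfillSt Y
  | .st C _, .st Y _ => C.unfillSt Y
  | _, Y => Y

@[simp]
theorem unfillSt_fill_st (C : AppCtx A) (X : SExp A) (e : StExp A) :
    C.unfillSt (C.fill (SExp.st X e)) = X := by
  induction C with
  | hole => rfl
  | pr C _ ih => exact ih
  | st C _ ih => exact ih

theorem not_sTerm_fill_st (C : AppCtx A) (X : SExp A) (e : StExp A) :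
    ¬ SExp.STerm (C.fill (SExp.st X e)) := by
  induction C with
  | hole => rintro ⟨⟩
  | pr C _ ih => rintro (_ | ⟨h, _⟩); exact ih h
  | st C _ ih => rintro ⟨⟩

/-- The context contributes no step of its own, since `C[X * e*]` does not terminate. -/
theorem bStep_fill_st_cases {C : AppCtx A} {X Y : SExp A} {e : StExp A}
    (h : SExp.BStep (C.fill (SExp.st X e)) Y) :
    (∃ X', SExp.BStep X X' ∧ Y = C.fill (SExp.st X' e)) ∨
      (SExp.STerm X ∧ Y = C.fill (SExp.up (StExp.star e))) := by
  obtain ⟨l, h⟩ := h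
  induction C generalizing Y with
  | hole =>
    cases h with
    | stL h => exact .inl ⟨_, ⟨l, h⟩, rfl⟩
    | stOne hX => exact .inr ⟨hX, rfl⟩
  | pr C _ ih =>
    cases h with
    | prL h =>
      rcases ih h with ⟨X', hX, rfl⟩ | ⟨hX, rfl⟩
      exacts [.inl ⟨X', hX, rfl⟩, .inr ⟨hX, rfl⟩]
    | prR hC _ => exact absurd hC (not_sTerm_fill_st C X e)
  | st C _ ih =>
    cases h with
    | stL h =>
      rcases ih h with ⟨X', hX, rfl⟩ | ⟨hX, rfl⟩
      exacts [.inl ⟨X', hX, rfl⟩, .inr ⟨hX, rfl⟩]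
    | stOne hC => exact absurd hC (not_sTerm_fill_st C X e)

/-- The states `f 0, …, f n` are `C[X₀ * e*], …, C[Xₙ * e*]` with `X₀ →bo ⋯ →bo Xₙ`. -/
def StackedPrefix (C : AppCtx A) (e : StExp A) (f : ℕ → SExp A) (n : ℕ) : Prop :=
  (∀ i ≤ n, f i = C.fill (SExp.st (C.unfillSt (f i)) e)) ∧
    ∀ i < n, SExp.BStep (C.unfillSt (f i)) (C.unfillSt (f (i + 1)))

theorem StackedPrefix.succ {C : AppCtx A} {e : StExp A} {f : ℕ → SExp A} {n : ℕ}
    (hf : StackedPrefix C e f n) {X : SExp A} (hX : SExp.BStep (C.unfillSt (f n)) X)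
    (hnext : f (n + 1) = C.fill (SExp.st X e)) : StackedPrefix C e f (n + 1) := by
  have hX' : C.unfillSt (f (n + 1)) = X := by rw [hnext, unfillSt_fill_st]
  refine ⟨fun i hi => ?_, fun i hi => ?_⟩
  · rcases Nat.le_succ_iff.1 hi with hi | rfl
    · exact hf.1 i hi
    · rwa [hX']
  · rcases Nat.lt_succ_iff_lt_or_eq.1 hi with hi | rfl
    · exact hf.2 i hi
    · rwa [hX']

end AppCtx

namespace BoPath

open AppCtx

variable {A : Type u} {C : AppCtx A} {E : SExp A} {e : StExp A}

theorem stackedPrefix_or_exit (p : BoPath A (C.fill (SExp.st E e))) {n : ℕ}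
    (hn : (n : ℕ∞) ≤ p.len) :
    StackedPrefix C e p.f n ∨ ∃ m < n, StackedPrefix C e p.f m ∧
      SExp.STerm (C.unfillSt (p.f m)) ∧ p.f (m + 1) = C.fill (SExp.up (StExp.star e)) := by
  induction n with
  | zero =>
    refine .inl ⟨fun i hi => ?_, fun i hi => absurd hi i.not_lt_zero⟩
    rw [Nat.le_zero.1 hi, p.head, unfillSt_fill_st]
  | succ n ih =>
    have hlt : (n : ℕ∞) < p.len := lt_of_lt_of_le (by exact_mod_cast n.lt_succ_self) hn
    rcases ih hlt.le with hpre | ⟨m, hm, hexit⟩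
    · have hstep := p.steps n hlt
      rw [hpre.1 n le_rfl] at hstep
      rcases bStep_fill_st_cases hstep with ⟨X, hX, hnext⟩ | ⟨hterm, hnext⟩
      · exact .inl (hpre.succ hX hnext)
      · exact .inr ⟨n, n.lt_succ_self, hpre, hterm, hnext⟩
    · exact .inr ⟨m, hm.trans n.lt_succ_self, hexit⟩

end BoPath

/-- Every maximal path of body transitions from `C[E * e*]` has
one of the two forms (i), (ii). -/
theorem maximal_body_paths_from_stacked_product {A : Type u}
    (C : AppCtx A) (E : SExp A) (e : StExp A)
    (p : BoPath A (C.fill (SExp.st E e))) :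
    (∃ g : ℕ → SExp A, g 0 = E ∧
      (∀ i : ℕ, (i : ℕ∞) < p.len → SExp.BStep (g i) (g (i + 1))) ∧
      (∀ i : ℕ, (i : ℕ∞) ≤ p.len → p.f i = C.fill (SExp.st (g i) e))) ∨
    (∃ n : ℕ, ∃ g : ℕ → SExp A, g 0 = E ∧
      (∀ i : ℕ, i < n → SExp.BStep (g i) (g (i + 1))) ∧
      (∀ i : ℕ, i ≤ n → p.f i = C.fill (SExp.st (g i) e)) ∧
      SExp.STerm (g n) ∧
      SExp.BStep (SExp.st (g n) e) (SExp.up (StExp.star e)) ∧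
      (n : ℕ∞) < p.len ∧
      p.f (n + 1) = C.fill (SExp.up (StExp.star e))) := by
  set g : ℕ → SExp A := fun i => C.unfillSt (p.f i)
  have hg0 : g 0 = E := by simp only [g, p.head, AppCtx.unfillSt_fill_st]
  by_cases hexit : ∃ n : ℕ, (n : ℕ∞) < p.len ∧ AppCtx.StackedPrefix C e p.f n ∧
      SExp.STerm (g n) ∧ p.f (n + 1) = C.fill (SExp.up (StExp.star e))
  · obtain ⟨n, hn, ⟨hfill, hsteps⟩, hterm, hnext⟩ := hexit
    exact .inr ⟨n, g, hg0, hsteps, hfill, hterm, ⟨none, .stOne hterm⟩, hn, hnext⟩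
  · have hpre : ∀ n : ℕ, (n : ℕ∞) ≤ p.len → AppCtx.StackedPrefix C e p.f n :=
      fun n hn => (p.stackedPrefix_or_exit hn).resolve_right fun ⟨m, hm, hstop⟩ =>
        hexit ⟨m, lt_of_lt_of_le (by exact_mod_cast hm) hn, hstop⟩
    refine .inl ⟨g, hg0, fun i hi => ?_, fun i hi => (hpre i hi).1 i le_rfl⟩
    exact (hpre (i + 1) (by exact_mod_cast Order.add_one_le_of_lt hi)).2 i i.lt_succ_self
end

section
/- Every maximal path of body transitions (→bo) from E·e in L̂1(StExp^(*)(A)), where E is a stacked star expression and e a star expression, has one of the two forms: (i) E0·e →bo E1·e →bo ... (finite or infinite) where E = E0 →bo E1 →bo ... is a →bo path of stacked star expressions; or (ii) E0·e →bo ... →bo En·e →bo F →bo ... for some n ∈ ℕ, stacked star expressions E0,...,En,F with E = E0 →bo ... →bo En, En↓, and e →l F for some marking label l. -/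
universe u v w

/-!
A body step from a product `G·e` either is a body step of `G` kept under `·e`, or, when `G`
terminates, a step of `e`. Reading off the left factors `Gᵢ` of the states of a body path from
`E·e`, either the first case occurs at every step (form (i)), or the second case occurs at a
first position `n`, before which the path is a lifted body path of `E` (form (ii)).
-/

namespace SExp

variable {A : Type u}

def leftFactor : SExp A → SExp A
  | .pr G _ => G
  | X => X

@[simp]
theorem leftFactor_pr (G : SExp A) (e : StExp A) : leftFactor (pr G e) = G := rfl

theorem BStep.pr_cases {G Y : SExp A} {e : StExp A} (h : BStep (pr G e) Y) :
    (∃ G', Y = pr G' e ∧ BStep G G') ∨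
    (STerm G ∧ ∃ (a : Option A) (l : ℕ), MStep (up e) (a, l) Y) := by
  obtain ⟨l, h⟩ := h
  cases h with
  | prL h => exact Or.inl ⟨_, rfl, _, h⟩
  | prR hG h => exact Or.inr ⟨hG, _, _, h⟩

end SExp

namespace BoPath

open SExp

variable {A : Type u} {E : SExp A} {e : StExp A} (p : BoPath A (pr E e))

def LiftedUpTo (n : ℕ) : Prop :=
  (∀ i ≤ n, p.f i = pr (leftFactor (p.f i)) e) ∧
  ∀ i < n, BStep (leftFactor (p.f i)) (leftFactor (p.f (i + 1)))

def ExitsAt (n : ℕ) : Prop :=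
  p.LiftedUpTo n ∧ STerm (leftFactor (p.f n)) ∧
  (∃ (a : Option A) (l : ℕ), MStep (up e) (a, l) (p.f (n + 1))) ∧ (n : ℕ∞) < p.len

theorem liftedUpTo_zero : p.LiftedUpTo 0 :=
  ⟨fun i hi => by rw [Nat.le_zero.mp hi, p.head, leftFactor_pr],
    fun i hi => absurd hi (Nat.not_lt_zero i)⟩

theorem LiftedUpTo.succ_or_exitsAt {p : BoPath A (pr E e)} {n : ℕ} (hn : p.LiftedUpTo n)
    (hlt : (n : ℕ∞) < p.len) : p.LiftedUpTo (n + 1) ∨ p.ExitsAt n := by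
  obtain ⟨hshape, hchain⟩ := hn
  have hstep := p.steps n hlt
  rw [hshape n le_rfl] at hstep
  rcases hstep.pr_cases with ⟨G', hf, hG'⟩ | ⟨hterm, hexit⟩
  · refine Or.inl ⟨fun i hi => ?_, fun i hi => ?_⟩
    · rcases (Nat.le_succ_iff.mp hi) with hi | rfl
      · exact hshape i hi
      · rw [hf, leftFactor_pr]
    · rcases (Nat.lt_succ_iff_lt_or_eq.mp hi) with hi | rfl
      · exact hchain i hi
      · rwa [hf, leftFactor_pr]
  · exact Or.inr ⟨⟨hshape, hchain⟩, hterm, hexit, hlt⟩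

theorem liftedUpTo_or_exitsAt (n : ℕ) (hn : (n : ℕ∞) ≤ p.len) :
    p.LiftedUpTo n ∨ ∃ m, p.ExitsAt m := by
  induction n with
  | zero => exact Or.inl p.liftedUpTo_zero
  | succ n ih =>
    have hlt : (n : ℕ∞) < p.len :=
      (ENat.add_one_le_iff (ENat.natCast_ne_top n)).mp (by exact_mod_cast hn)
    rcases ih hlt.le with hlift | hexit
    · exact (hlift.succ_or_exitsAt hlt).imp_right fun h => ⟨n, h⟩
    · exact Or.inr hexit

end BoPath

/-- Every maximal path of body transitions from `E·e` has one of
the two forms (i), (ii). -/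
theorem maximal_body_paths_from_product {A : Type u}
    (E : SExp A) (e : StExp A) (p : BoPath A (SExp.pr E e)) :
    (∃ g : ℕ → SExp A, g 0 = E ∧
      (∀ i : ℕ, (i : ℕ∞) < p.len → SExp.BStep (g i) (g (i + 1))) ∧
      (∀ i : ℕ, (i : ℕ∞) ≤ p.len → p.f i = SExp.pr (g i) e)) ∨
    (∃ n : ℕ, ∃ g : ℕ → SExp A, ∃ F : SExp A, g 0 = E ∧
      (∀ i : ℕ, i < n → SExp.BStep (g i) (g (i + 1))) ∧
      (∀ i : ℕ, i ≤ n → p.f i = SExp.pr (g i) e) ∧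
      SExp.STerm (g n) ∧
      (∃ (a : Option A) (l : ℕ), SExp.MStep (SExp.up e) (a, l) F) ∧
      (n : ℕ∞) < p.len ∧
      p.f (n + 1) = F) := by
  set g : ℕ → SExp A := fun i => SExp.leftFactor (p.f i)
  have g0 : g 0 = E := by simp only [g, p.head, SExp.leftFactor_pr]
  by_cases hexit : ∃ n, p.ExitsAt n
  · obtain ⟨n, ⟨hshape, hchain⟩, hterm, hstep, hlt⟩ := hexit
    exact Or.inr ⟨n, g, p.f (n + 1), g0, hchain, hshape, hterm, hstep, hlt, rfl⟩
  · have lifted : ∀ n : ℕ, (n : ℕ∞) ≤ p.len → p.LiftedUpTo n := fun n hn =>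
      (p.liftedUpTo_or_exitsAt n hn).resolve_right hexit
    refine Or.inl ⟨g, g0, fun i hi => ?_, fun i hi => (lifted i hi).1 i le_rfl⟩
    have hsucc : ((i + 1 : ℕ) : ℕ∞) ≤ p.len := by exact_mod_cast Order.add_one_le_of_lt hi
    exact (lifted (i + 1) hsucc).2 i (Nat.lt_succ_self i)
end
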